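/- There exists N such that for all n ≥ N, k̄_n ≤ j_n; informally, the gambler accepts the value a later than it accepts the value b not having seen the value a. -/

import Mathlib

/-- Auxiliary sequence for the thresholds `φ^{(n)}_k`, counted backwards from time `n`:
`phiAux b p n m = φ^{(n)}_{n-m}`. -/
noncomputable def phiAux (b p : ℝ) (n : ℕ) : ℕ → ℝ
  | 0 => (1 + b * p) / n
  | m + 1 =>
      (1 / (n : ℝ) ^ 2) * max (n : ℝ) (phiAux b p n m)
        + (p / n) * max b (phiAux b p n m)
        + (1 - p / n - 1 / (n : ℝ) ^ 2) * max 0 (phiAux b p n m)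

/-- The threshold `φ^{(n)}_k`: the expected future reward of the optimal rule at time `k`
given that the value `a` has already been probed.  Defined by `φ^{(n)}_n = (1+b·p)/n` and,
for `1 ≤ k < n`,
`φ^{(n)}_k = (1/n²)·max(n, φ^{(n)}_{k+1}) + (p/n)·max(b, φ^{(n)}_{k+1})
  + (1 − p/n − 1/n²)·max(0, φ^{(n)}_{k+1})`. -/
noncomputable def phi (b p : ℝ) (n k : ℕ) : ℝ := phiAux b p n (n - k)

/-- Auxiliary sequence for the thresholds `φ̄^{(n)}_k`, counted backwards from time `n`:
`phibarAux a b p n m = φ̄^{(n)}_{n-m}`. -/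
noncomputable def phibarAux (a b p : ℝ) (n : ℕ) : ℕ → ℝ
  | 0 => a
  | m + 1 =>
      max a (phiAux b p n m) / ((m : ℝ) + 2)
        + (1 - 1 / ((m : ℝ) + 2)) *
            ((1 / (n : ℝ) ^ 2) * max (n : ℝ) (phibarAux a b p n m)
              + (p / n) * max b (phibarAux a b p n m)
              + (1 - p / n - 1 / (n : ℝ) ^ 2) * max 0 (phibarAux a b p n m))

/-- The threshold `φ̄^{(n)}_k`: the expected future reward of the optimal rule at time `k`
given that the value `a` has not been probed yet.  Defined by `φ̄^{(n)}_n = a` and, for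
`1 ≤ k < n`,
`φ̄^{(n)}_k = max(a, φ^{(n)}_{k+1})/(n+1−k) + (1 − 1/(n+1−k))·[(1/n²)·max(n, φ̄^{(n)}_{k+1})
  + (p/n)·max(b, φ̄^{(n)}_{k+1}) + (1 − p/n − 1/n²)·max(0, φ̄^{(n)}_{k+1})]`. -/
noncomputable def phibar (a b p : ℝ) (n k : ℕ) : ℝ := phibarAux a b p n (n - k)

/-- `j_n`: the earliest time `k ∈ {1,…,n}` with `a ≥ φ^{(n)}_k`. -/
noncomputable def jn (a b p : ℝ) (n : ℕ) : ℕ :=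
  sInf {k : ℕ | 1 ≤ k ∧ k ≤ n ∧ phi b p n k ≤ a}

/-- `k_n`: the earliest time `k ∈ {1,…,n}` with `b ≥ φ^{(n)}_k`. -/
noncomputable def kn (b p : ℝ) (n : ℕ) : ℕ :=
  sInf {k : ℕ | 1 ≤ k ∧ k ≤ n ∧ phi b p n k ≤ b}

/-- `k̄_n`: the earliest time `k ∈ {1,…,n}` with `b ≥ φ̄^{(n)}_k`. -/
noncomputable def kbarn (a b p : ℝ) (n : ℕ) : ℕ :=
  sInf {k : ℕ | 1 ≤ k ∧ k ≤ n ∧ phibar a b p n k ≤ b}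

/-!
Write `u = 1/n`, `α = 1 - p u - u²` (`decay`), `q = (1 + b p) u`, `B = (1 + b p)/(p + u)`
(`fixedPoint`, the fixed point of `x ↦ q + α x`) and `A = (a + q - B)/(p + u)` (`offset`).
Counting `m` steps back from time `n`, as long as `φ ≤ a` both recursions are affine and
`φ = B + (q - B) αᵐ`, `u (m + 1) φ̄ = A + B u m + (a u - A) αᵐ`.
So `φ̄ ≤ b` up to time `j_n` amounts to the nonpositivity of a convex function of the continuous
time `s = u m` on `[0, L]`, where `L` (`crossTime`) bounds the time at which `φ` reaches `a`.
At `s = 0` its value is `(a - b) u`; at `s = L` it is at most `endpointGap u`, which is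
continuous at `u = 0` with value `(r log r - a p)/(r p²)`, `r = (1 + b p)/(1 + (b - a) p)`.
With `x = (b - a) p`, condition (III) reads `(1 + x) log r < 2 x`, and this forces
`r log r < (r - 1)(1 + x) = a p`: for `ρ = (1 + x)²/(1 + x²)` the bound `log ρ ≤ sinh (log ρ)`
gives `ρ log ρ ≤ (ρ - 1)(1 + x)`, and `t ↦ t log t` is strictly convex.
-/

open Real Filter Topology

namespace Real

lemma log_le_sub_inv_div_two {y : ℝ} (hy : 1 ≤ y) : log y ≤ (y - y⁻¹) / 2 := by
  rw [← sinh_log (by linarith)]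
  exact self_le_sinh_iff.2 (log_nonneg hy)

lemma log_sq_div_one_add_sq_le {x : ℝ} (hx : 0 ≤ x) :
    log ((1 + x) ^ 2 / (1 + x ^ 2)) ≤ 2 * x / (1 + x) := by
  have hρ : 1 ≤ (1 + x) ^ 2 / (1 + x ^ 2) := by
    rw [le_div_iff₀ (by positivity)]; nlinarith
  refine (log_le_sub_inv_div_two hρ).trans ?_
  rw [inv_div, div_le_div_iff₀ (by positivity) (by positivity)]
  field_simp
  nlinarith [pow_nonneg hx 3, pow_nonneg hx 4, pow_nonneg hx 5]

theorem mul_log_lt_sub_one_mul {x r : ℝ} (hx : 0 < x) (hr : 1 < r)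
    (h : log r < 2 * x / (1 + x)) : r * log r < (r - 1) * (1 + x) := by
  set ρ := (1 + x) ^ 2 / (1 + x ^ 2) with hρ_def
  have hρ_inv : (1 - ρ⁻¹) * (1 + x) = 2 * x / (1 + x) := by
    rw [hρ_def]; field_simp; ring
  have hρ : 1 < ρ := by rw [hρ_def, lt_div_iff₀ (by positivity)]; nlinarith
  have hρ_log : ρ * log ρ ≤ (ρ - 1) * (1 + x) := by
    have := log_sq_div_one_add_sq_le hx.le
    rw [← hρ_def, ← hρ_inv] at this
    calc ρ * log ρ ≤ ρ * ((1 - ρ⁻¹) * (1 + x)) := by gcongr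
      _ = (ρ - 1) * (1 + x) := by field_simp
  by_contra! hge
  rcases lt_or_ge r ρ with hrρ | hρr
  · have hconv := strictConvexOn_mul_log.secant_strict_mono_aux1 (x := 1) (y := r) (z := ρ)
      (by simp) (by simp; linarith) hr hrρ
    simp only [log_one, mul_zero, zero_add] at hconv
    linarith [mul_le_mul_of_nonneg_left hρ_log (by linarith : (0:ℝ) ≤ r - 1),
      mul_le_mul_of_nonneg_left hge (by linarith : (0:ℝ) ≤ ρ - 1)]
  · have : (1 - ρ⁻¹) * (1 + x) ≤ log r := by
      calc (1 - ρ⁻¹) * (1 + x) ≤ (1 - r⁻¹) * (1 + x) := by gcongr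
        _ = (r - 1) * (1 + x) / r := by field_simp
        _ ≤ log r := by rwa [div_le_iff₀' (by linarith)]
    linarith

lemma exp_mul_le_one_sub_add_mul_exp {t : ℝ} (ht0 : 0 ≤ t) (ht1 : t ≤ 1) (y : ℝ) :
    exp (t * y) ≤ 1 - t + t * exp y := by
  simpa using convexOn_exp.2 (Set.mem_univ 0) (Set.mem_univ y) (sub_nonneg.2 ht1) ht0 (by ring)

end Real

noncomputable section

variable (a b p : ℝ)

def decay (u : ℝ) : ℝ := 1 - p * u - u ^ 2

def fixedPoint (u : ℝ) : ℝ := (1 + b * p) / (p + u)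

def offset (u : ℝ) : ℝ := (a + (1 + b * p) * u - fixedPoint b p u) / (p + u)

def crossRatio (u : ℝ) : ℝ :=
  (fixedPoint b p u - a) / (fixedPoint b p u - (1 + b * p) * u)

def crossTime (u : ℝ) : ℝ := -log (crossRatio a b p u) / (p + u)

def endpointGap (u : ℝ) : ℝ :=
  offset a b p u + fixedPoint b p u * crossTime a b p u
    + (a * u - offset a b p u) * crossRatio a b p u - b * (crossTime a b p u + u)

end

section ContinuousTime

variable {a b p u : ℝ}

lemma one_sub_decay : 1 - decay p u = u * (p + u) := by
  unfold decay; ring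

lemma fixedPoint_mul_add (h : p + u ≠ 0) : fixedPoint b p u * (p + u) = 1 + b * p :=
  div_mul_cancel₀ _ h

lemma offset_mul_add (h : p + u ≠ 0) :
    offset a b p u * (p + u) = a + (1 + b * p) * u - fixedPoint b p u :=
  div_mul_cancel₀ _ h

lemma fixedPoint_sub_eq (h : p + u ≠ 0) :
    fixedPoint b p u - (1 + b * p) * u = decay p u * fixedPoint b p u := by
  linear_combination u * fixedPoint_mul_add (b := b) h
    + fixedPoint b p u * one_sub_decay (p := p) (u := u)

lemma sub_offset_eq (h : p + u ≠ 0) :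
    a * u - offset a b p u = decay p u * (fixedPoint b p u - a) / (p + u) := by
  rw [eq_div_iff h]
  linear_combination (-1) * offset_mul_add (a := a) (b := b) h + fixedPoint_sub_eq (b := b) h
    - a * one_sub_decay (p := p) (u := u)

lemma sub_offset_nonneg (hp : 0 < p) (hu : 0 < u) (hα : 0 < decay p u)
    (haB : a < fixedPoint b p u) : 0 ≤ a * u - offset a b p u := by
  rw [sub_offset_eq (by positivity)]
  exact div_nonneg (mul_nonneg hα.le (by linarith)) (by positivity)

lemma le_fixedPoint (hp : 0 < p) (hu : 0 < u) (hbu : b * u ≤ 1) : b ≤ fixedPoint b p u := by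
  rw [fixedPoint, le_div_iff₀ (by positivity)]
  linarith

variable (hp : 0 < p) (hu : 0 < u) (hα : 0 < decay p u) (ha : 0 ≤ a)
  (haB : a < fixedPoint b p u)
include hp hu hα ha haB

lemma crossRatio_pos : 0 < crossRatio a b p u := by
  rw [crossRatio, fixedPoint_sub_eq (by positivity)]
  exact div_pos (by linarith) (by nlinarith)

lemma mul_le_crossTime {m : ℕ} (hm : crossRatio a b p u ≤ decay p u ^ m) :
    u * m ≤ crossTime a b p u := by
  have hlog : log (crossRatio a b p u) ≤ m * (decay p u - 1) := by
    calc log (crossRatio a b p u) ≤ log (decay p u ^ m) :=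
          log_le_log (crossRatio_pos hp hu hα ha haB) hm
      _ = m * log (decay p u) := log_pow _ _
      _ ≤ m * (decay p u - 1) := by gcongr; exact log_le_sub_one_of_pos hα
  rw [crossTime, le_div_iff₀ (by positivity)]
  nlinarith [one_sub_decay (p := p) (u := u)]

lemma exp_crossTime_le (hL : 0 ≤ crossTime a b p u) :
    exp (crossTime a b p u / u * log (decay p u)) ≤ crossRatio a b p u := by
  rw [← le_log_iff_exp_le (crossRatio_pos hp hu hα ha haB)]
  calc crossTime a b p u / u * log (decay p u)
      ≤ crossTime a b p u / u * (decay p u - 1) := by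
        gcongr; exact log_le_sub_one_of_pos hα
    _ = log (crossRatio a b p u) := by
        rw [← neg_sub, one_sub_decay, crossTime]; field_simp

lemma offset_add_fixedPoint_mul_le (hab : a ≤ b) (hG : endpointGap a b p u ≤ 0) {m : ℕ}
    (hm : crossRatio a b p u ≤ decay p u ^ m) :
    offset a b p u + fixedPoint b p u * (u * m) + (a * u - offset a b p u) * decay p u ^ m
      ≤ b * (u * m + u) := by
  set L := crossTime a b p u
  have hmL : u * m ≤ L := mul_le_crossTime hp hu hα ha haB hm
  have hm0 : 0 ≤ u * m := by positivity
  have hL : 0 ≤ L := hm0.trans hmL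
  set μ := u * m / L
  have hμ0 : 0 ≤ μ := by positivity
  have hμ1 : μ ≤ 1 := div_le_one_of_le₀ hmL hL
  have hμL : u * m = μ * L := by
    rcases hL.eq_or_lt with h | h
    · simp [← h, le_antisymm (h ▸ hmL) hm0]
    · exact (div_mul_cancel₀ _ h.ne').symm
  have hpow : decay p u ^ m ≤ 1 - μ + μ * crossRatio a b p u := by
    calc decay p u ^ m = exp (μ * (L / u * log (decay p u))) := by
          rw [← exp_log (pow_pos hα m), log_pow]
          congr 1
          field_simp
          linear_combination log (decay p u) * hμL
      _ ≤ 1 - μ + μ * exp (L / u * log (decay p u)) := exp_mul_le_one_sub_add_mul_exp hμ0 hμ1 _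
      _ ≤ 1 - μ + μ * crossRatio a b p u := by
          gcongr; exact exp_crossTime_le hp hu hα ha haB hL
  unfold endpointGap at hG
  rw [hμL]
  linarith [mul_le_mul_of_nonneg_left hpow (sub_offset_nonneg hp hu hα haB),
    mul_le_mul_of_nonneg_left hG hμ0,
    mul_nonneg (sub_nonneg.2 hμ1) (mul_nonneg hu.le (sub_nonneg.2 hab))]

end ContinuousTime

/-- `E[max(X, x)]` for a draw `X` equal to `n` with probability `1/n²`, to `b` with probability
`p/n` and to `0` otherwise. -/
noncomputable def expectedMax (b p : ℝ) (n : ℕ) (x : ℝ) : ℝ :=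
  (1 / (n : ℝ) ^ 2) * max (n : ℝ) x + (p / n) * max b x
    + (1 - p / n - 1 / (n : ℝ) ^ 2) * max 0 x

section Thresholds

variable {a b p : ℝ} {n : ℕ}

lemma phiAux_succ (m : ℕ) : phiAux b p n (m + 1) = expectedMax b p n (phiAux b p n m) := rfl

lemma phibarAux_succ (m : ℕ) :
    phibarAux a b p n (m + 1) = max a (phiAux b p n m) / ((m : ℝ) + 2)
      + (1 - 1 / ((m : ℝ) + 2)) * expectedMax b p n (phibarAux a b p n m) := rfl

lemma one_sub_div_sub_one_div_sq : 1 - p / n - 1 / (n : ℝ) ^ 2 = decay p (n : ℝ)⁻¹ := by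
  unfold decay; ring

lemma expectedMax_nonneg (hb : 0 ≤ b) (hp : 0 ≤ p) (hα : 0 ≤ decay p (n : ℝ)⁻¹) (x : ℝ) :
    0 ≤ expectedMax b p n x := by
  rw [expectedMax, one_sub_div_sub_one_div_sq]
  have := (Nat.cast_nonneg n).trans (le_max_left (n : ℝ) x)
  have := hb.trans (le_max_left b x)
  have := le_max_left 0 x
  positivity

lemma le_expectedMax (hp : 0 ≤ p) (hα : 0 ≤ decay p (n : ℝ)⁻¹) (x : ℝ) :
    x ≤ expectedMax b p n x := by
  calc x = (1 / (n : ℝ) ^ 2) * x + (p / n) * x + (1 - p / n - 1 / (n : ℝ) ^ 2) * x := by ring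
    _ ≤ expectedMax b p n x := by
      rw [expectedMax]
      have : 0 ≤ 1 - p / n - 1 / (n : ℝ) ^ 2 := by rwa [one_sub_div_sub_one_div_sq]
      gcongr <;> exact le_max_right _ _

lemma expectedMax_of_le {x : ℝ} (hn : 0 < n) (hx0 : 0 ≤ x) (hxb : x ≤ b) (hxn : x ≤ n) :
    expectedMax b p n x = (1 + b * p) * (n : ℝ)⁻¹ + decay p (n : ℝ)⁻¹ * x := by
  rw [expectedMax, max_eq_left hxn, max_eq_left hxb, max_eq_right hx0,
    one_sub_div_sub_one_div_sq]
  field_simp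

lemma phiAux_nonneg (hb : 0 ≤ b) (hp : 0 ≤ p) (hα : 0 ≤ decay p (n : ℝ)⁻¹) :
    ∀ m, 0 ≤ phiAux b p n m
  | 0 => by rw [phiAux]; positivity
  | _ + 1 => expectedMax_nonneg hb hp hα _

lemma phiAux_monotone (hp : 0 ≤ p) (hα : 0 ≤ decay p (n : ℝ)⁻¹) : Monotone (phiAux b p n) :=
  monotone_nat_of_le_succ fun _ => le_expectedMax hp hα _

lemma phibarAux_nonneg (ha : 0 ≤ a) (hb : 0 ≤ b) (hp : 0 ≤ p) (hα : 0 ≤ decay p (n : ℝ)⁻¹) :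
    ∀ m, 0 ≤ phibarAux a b p n m
  | 0 => ha
  | m + 1 => by
    rw [phibarAux_succ]
    have : 1 / ((m : ℝ) + 2) ≤ 1 := by rw [div_le_one (by positivity)]; linarith
    have := expectedMax_nonneg hb hp hα (phibarAux a b p n m)
    have := ha.trans (le_max_left a (phiAux b p n m))
    have : 0 ≤ 1 - 1 / ((m : ℝ) + 2) := by linarith
    positivity

end Thresholds

section ClosedForms

lemma a_lt_fixedPoint {a b p : ℝ} {n : ℕ} (hab : a < b) (hp : 0 < p) (hn : 0 < n) (hbn : b ≤ n) :
    a < fixedPoint b p (n : ℝ)⁻¹ :=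
  hab.trans_le (le_fixedPoint hp (by positivity) (by
    rw [← div_eq_mul_inv, div_le_one (by positivity)]; exact hbn))

variable {a b p : ℝ} {n : ℕ} (ha : 0 < a) (hab : a < b) (hp : 0 < p) (hn : 0 < n)
  (hbn : b ≤ n) (hα : 0 < decay p (n : ℝ)⁻¹)
include ha hab hp hn hbn hα

lemma phiAux_eq_of_le {m : ℕ} (hm : phiAux b p n m ≤ a) :
    phiAux b p n m = fixedPoint b p (n : ℝ)⁻¹
      + ((1 + b * p) * (n : ℝ)⁻¹ - fixedPoint b p (n : ℝ)⁻¹) * decay p (n : ℝ)⁻¹ ^ m := by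
  induction m with
  | zero => simp [phiAux, div_eq_mul_inv]
  | succ m ih =>
    have hm' : phiAux b p n m ≤ a := (phiAux_monotone hp.le hα.le m.le_succ).trans hm
    rw [phiAux_succ, expectedMax_of_le hn (phiAux_nonneg (ha.trans hab).le hp.le hα.le m)
      (by linarith) (by linarith), ih hm', pow_succ]
    linear_combination (-1) * fixedPoint_sub_eq (b := b) (p := p) (u := (n : ℝ)⁻¹) (by positivity)

lemma crossRatio_le_decay_pow {m : ℕ} (hm : phiAux b p n m ≤ a) :
    crossRatio a b p (n : ℝ)⁻¹ ≤ decay p (n : ℝ)⁻¹ ^ m := by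
  have hB := a_lt_fixedPoint hab hp hn hbn
  have hBq : 0 < fixedPoint b p (n : ℝ)⁻¹ - (1 + b * p) * (n : ℝ)⁻¹ := by
    rw [fixedPoint_sub_eq (by positivity)]; nlinarith
  rw [crossRatio, div_le_iff₀ hBq]
  linarith [phiAux_eq_of_le ha hab hp hn hbn hα hm]

lemma phibarAux_eq_and_le (hG : endpointGap a b p (n : ℝ)⁻¹ ≤ 0) (m : ℕ)
    (hm : phiAux b p n m ≤ a) :
    (n : ℝ)⁻¹ * (m + 1) * phibarAux a b p n m
        = offset a b p (n : ℝ)⁻¹ + fixedPoint b p (n : ℝ)⁻¹ * ((n : ℝ)⁻¹ * m)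
          + (a * (n : ℝ)⁻¹ - offset a b p (n : ℝ)⁻¹) * decay p (n : ℝ)⁻¹ ^ m
      ∧ phibarAux a b p n m ≤ b := by
  set u := (n : ℝ)⁻¹ with hu_def
  have hu : 0 < u := by positivity
  have hpu : p + u ≠ 0 := by positivity
  induction m with
  | zero => exact ⟨by simp [phibarAux, mul_comm], by simpa [phibarAux] using hab.le⟩
  | succ m ih =>
    have hm' : phiAux b p n m ≤ a := (phiAux_monotone hp.le hα.le m.le_succ).trans hm
    obtain ⟨ih_eq, ih_le⟩ := ih hm'
    have hrec : u * (m + 2) * phibarAux a b p n (m + 1)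
        = a * u + u * (m + 1) * ((1 + b * p) * u)
          + decay p u * (u * (m + 1) * phibarAux a b p n m) := by
      rw [phibarAux_succ, max_eq_left hm', expectedMax_of_le hn
        (phibarAux_nonneg ha.le (ha.trans hab).le hp.le hα.le m) ih_le (ih_le.trans hbn), ← hu_def]
      field_simp
      ring
    have heq : u * ((m + 1 : ℕ) + 1) * phibarAux a b p n (m + 1)
        = offset a b p u + fixedPoint b p u * (u * (m + 1 : ℕ))
          + (a * u - offset a b p u) * decay p u ^ (m + 1) := by
      push_cast
      linear_combination hrec + decay p u * ih_eq
        - (offset a b p u + fixedPoint b p u * (u * m)) * one_sub_decay (p := p) (u := u)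
        - u * offset_mul_add (a := a) (b := b) hpu - u ^ 2 * m * fixedPoint_mul_add (b := b) hpu
    refine ⟨heq, le_of_mul_le_mul_left ?_ (by positivity : 0 < u * ((m + 1 : ℕ) + 1))⟩
    rw [heq]
    have := offset_add_fixedPoint_mul_le hp hu hα ha.le (a_lt_fixedPoint hab hp hn hbn) hab.le hG
      (crossRatio_le_decay_pow ha hab hp hn hbn hα hm)
    linarith

end ClosedForms

theorem kbarn_le_jn {a b p : ℝ} {n : ℕ} (ha : 0 < a) (hab : a < b) (hp : 0 < p) (hn : 0 < n)
    (hbn : b ≤ n) (hα : 0 < decay p (n : ℝ)⁻¹) (hq : (1 + b * p) * (n : ℝ)⁻¹ ≤ a)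
    (hG : endpointGap a b p (n : ℝ)⁻¹ ≤ 0) : kbarn a b p n ≤ jn a b p n := by
  have hn_mem : n ∈ {k : ℕ | 1 ≤ k ∧ k ≤ n ∧ phi b p n k ≤ a} :=
    ⟨hn, le_rfl, by simpa [phi, phiAux, div_eq_mul_inv] using hq⟩
  obtain ⟨hj1, hjn, hj⟩ : jn a b p n ∈ {k : ℕ | 1 ≤ k ∧ k ≤ n ∧ phi b p n k ≤ a} :=
    Nat.sInf_mem ⟨n, hn_mem⟩
  exact Nat.sInf_le ⟨hj1, hjn, (phibarAux_eq_and_le ha hab hp hn hbn hα hG _ hj).2⟩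

section Limit

variable {a b p : ℝ}

lemma continuousAt_endpointGap (ha : 0 < a) (hab : a < b) (hp : 0 < p) :
    ContinuousAt (endpointGap a b p) 0 := by
  have hB : 0 < (1 + b * p) / p := div_pos (by nlinarith) hp
  have haB : 0 < (1 + b * p) / p - a := by
    rw [sub_pos, lt_div_iff₀ hp]; nlinarith
  have := hp.ne'
  have := hB.ne'
  have := (div_pos haB hB).ne'
  unfold endpointGap crossTime crossRatio offset fixedPoint
  fun_prop (disch := simp only [add_zero, mul_zero, sub_zero]; assumption)

lemma endpointGap_zero_neg (ha : 0 < a) (hab : a < b) (hp : 0 < p)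
    (h : log ((1 + b * p) / (1 + (b - a) * p)) < 2 * ((b - a) * p) / (1 + (b - a) * p)) :
    endpointGap a b p 0 < 0 := by
  set r := (1 + b * p) / (1 + (b - a) * p) with hr_def
  set x := (b - a) * p with hx_def
  have hx : 0 < x := mul_pos (by linarith) hp
  have hr : 1 < r := by rw [hr_def, one_lt_div (by linarith)]; nlinarith
  have hr_mul : r * (1 + x) = 1 + b * p := by rw [hr_def]; field_simp
  have hθ : crossRatio a b p 0 = r⁻¹ := by
    simp only [crossRatio, fixedPoint, add_zero, mul_zero, sub_zero, hr_def, inv_div]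
    field_simp
    ring
  have hG : endpointGap a b p 0 = (r * log r - a * p) / (r * p ^ 2) := by
    simp only [endpointGap, crossTime, offset, hθ, log_inv, fixedPoint, add_zero, mul_zero]
    field_simp
    linear_combination (-1) * hr_mul + r * hx_def
  rw [hG]
  exact div_neg_of_neg_of_pos (by linarith [mul_log_lt_sub_one_mul hx hr h]) (by positivity)

end Limit

lemma log_div_lt_of_lt_one_add_inv_mul_log {a b p : ℝ} (hab : a < b) (hp : 0 < p)
    (h : (1 - (2 - p) * (b - a)) / (1 + p * (b - a))
        < 1 + (1 / p) * log ((1 + p * (b - a)) / (1 + p * b))) :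
    log ((1 + b * p) / (1 + (b - a) * p)) < 2 * ((b - a) * p) / (1 + (b - a) * p) := by
  have hx : 0 < (b - a) * p := mul_pos (by linarith) hp
  rw [show (1 + p * (b - a)) / (1 + p * b) = ((1 + b * p) / (1 + (b - a) * p))⁻¹ by
    rw [inv_div]; ring, log_inv] at h
  -- keeps `field_simp` from normalising inside the logarithm
  set L := log ((1 + b * p) / (1 + (b - a) * p))
  rw [lt_div_iff₀ (by linarith)]
  rw [div_lt_iff₀ (by nlinarith)] at h
  field_simp at h
  linarith

theorem stmt_7_general (a b p : ℝ)
    (ha : 0 < a) (ha1 : a < 1) (hb : 1 < b) (hp : 0 < p)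
    (hIII : (1 - (2 - p) * (b - a)) / (1 + p * (b - a))
        < 1 + (1 / p) * Real.log ((1 + p * (b - a)) / (1 + p * b)))
    :
    ∃ N : ℕ, ∀ n : ℕ, N ≤ n → kbarn a b p n ≤ jn a b p n := by
  have hab : a < b := ha1.trans hb
  have hG : endpointGap a b p 0 < 0 :=
    endpointGap_zero_neg ha hab hp (log_div_lt_of_lt_one_add_inv_mul_log hab hp hIII)
  have hdecay : ∀ᶠ u in 𝓝 (0 : ℝ), 0 < decay p u :=
    continuousAt_const.eventually_lt (by unfold decay; fun_prop) (by simp [decay])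
  have hgain : ∀ᶠ u in 𝓝 (0 : ℝ), (1 + b * p) * u < a :=
    (continuousAt_const.mul continuousAt_id).eventually_lt continuousAt_const (by simpa using ha)
  have hgap : ∀ᶠ u in 𝓝 (0 : ℝ), endpointGap a b p u < 0 :=
    (continuousAt_endpointGap ha hab hp).eventually_lt continuousAt_const hG
  have hsmall := hdecay.and (hgain.and hgap)
  obtain ⟨N, hN⟩ := eventually_atTop.1 ((tendsto_inv_atTop_nhds_zero_nat.eventually hsmall).and
    ((eventually_gt_atTop 0).and (tendsto_natCast_atTop_atTop.eventually_ge_atTop b)))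
  refine ⟨N, fun n hn => ?_⟩
  obtain ⟨⟨hα, hq, hGn⟩, hn0, hbn⟩ := hN n hn
  exact kbarn_le_jn ha hab hp hn0 hbn hα hq.le hGn.le

/-- eventually `k̄_n ≤ j_n`: the gambler accepts the value `a` later than it
accepts the value `b` not having seen the value `a`. -/
theorem stmt_7 (a b p : ℝ)
    (ha : 0 < a) (ha1 : a < 1) (hb : 1 < b) (hp : 0 < p)
    (hlog : Real.log (1 + p * b) < p)
    (hI : (1 + b * p) / (1 + (b - a) * p) * Real.log ((1 + b * p) / (1 + (b - a) * p)) ≤ a * p)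
    (hII : (2 - p) * (b - a) < 1)
    (hIII : (1 - (2 - p) * (b - a)) / (1 + p * (b - a))
        < 1 + (1 / p) * Real.log ((1 + p * (b - a)) / (1 + p * b)))
    (hIV : 0 ≤ 2 + p * b * (1 - p * (b - a)))
    (hV : b * p * (1 + (b - a) * p) / ((1 + p * b) * Real.log (1 + p * b)) < 1)
    :
    ∃ N : ℕ, ∀ n : ℕ, N ≤ n → kbarn a b p n ≤ jn a b p n :=
  stmt_7_general a b p ha ha1 hb hp hIII
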